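/- In the two-contour setting, the operator Ω⁻ = ∫₀¹ γ'(t) · ((H⁺)* − γ(t))⁻¹ ∘ K(γ(t)) ∘ (H⁻ − γ(t))⁻¹ dt satisfies ‖Ω⁻‖ < 1, and likewise Ω⁺ = ∫₀¹ conj(γ'(t)) · ((H⁻)* − conj(γ(t)))⁻¹ ∘ K(conj(γ(t))) ∘ (H⁺ − conj(γ(t)))⁻¹ dt satisfies ‖Ω⁺‖ < 1. -/

import Mathlib

open MeasureTheory Metric Set

noncomputable section

variable {H : Type*} [NormedAddCommGroup H] [InnerProductSpace ℂ H] [CompleteSpace H]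

/-- `d₀ = inf_{t ∈ [0,1]} dist (γ t, σ(A))`. -/
noncomputable def curveDist (A : H →L[ℂ] H) (γ : ℝ → ℂ) : ℝ :=
  ⨅ t : Set.Icc (0 : ℝ) 1, Metric.infDist (γ t) (spectrum ℂ A)

/-- `V₀ = ∫₀¹ |γ'(t)| ‖K(γ(t))‖ dt`. -/
noncomputable def curveVar (K : ℂ → H →L[ℂ] H) (γ : ℝ → ℂ) : ℝ :=
  ∫ t in (0:ℝ)..1, ‖derivWithin γ (Set.Icc 0 1) t‖ * ‖K (γ t)‖

/-- `V(Y) = ∫₀¹ γ'(t) • K(γ(t)) ∘ (Y − γ(t))⁻¹ dt` (Bochner integral in `B(H)`). -/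
noncomputable def Vmap (K : ℂ → H →L[ℂ] H) (γ : ℝ → ℂ) (Y : H →L[ℂ] H) : H →L[ℂ] H :=
  ∫ t in (0:ℝ)..1, derivWithin γ (Set.Icc 0 1) t •
    (K (γ t) ∘L Ring.inverse (Y - γ t • (1 : H →L[ℂ] H)))

/-- `r_min = d₀/2 − √(d₀²/4 − V₀)`. -/
noncomputable def rMin (A : H →L[ℂ] H) (K : ℂ → H →L[ℂ] H) (γ : ℝ → ℂ) : ℝ :=
  curveDist A γ / 2 - Real.sqrt ((curveDist A γ) ^ 2 / 4 - curveVar K γ)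

/-- `V₁(z) = ∫₀¹ γ'(t) (z − γ(t))⁻¹ • K(γ(t)) dt`. -/
noncomputable def V1 (K : ℂ → H →L[ℂ] H) (γ : ℝ → ℂ) (z : ℂ) : H →L[ℂ] H :=
  ∫ t in (0:ℝ)..1, (derivWithin γ (Set.Icc 0 1) t * (z - γ t)⁻¹) • K (γ t)

/-- The continued transfer function `M(z) = A − z + V₁(z)`. -/
noncomputable def Mfun (A : H →L[ℂ] H) (K : ℂ → H →L[ℂ] H) (γ : ℝ → ℂ) (z : ℂ) :
    H →L[ℂ] H :=
  A - z • (1 : H →L[ℂ] H) + V1 K γ z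

/-- `Ω⁻ = ∫₀¹ γ'(t) • ((H⁺)* − γ(t))⁻¹ ∘ K(γ(t)) ∘ (H⁻ − γ(t))⁻¹ dt`. -/
noncomputable def OmegaMinus (K : ℂ → H →L[ℂ] H) (γ : ℝ → ℂ) (Hm Hp : H →L[ℂ] H) :
    H →L[ℂ] H :=
  ∫ t in (0:ℝ)..1, derivWithin γ (Set.Icc 0 1) t •
    (Ring.inverse (ContinuousLinearMap.adjoint Hp - γ t • (1 : H →L[ℂ] H)) ∘L
      K (γ t) ∘L Ring.inverse (Hm - γ t • (1 : H →L[ℂ] H)))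

/-- `Ω⁺ = ∫₀¹ conj γ'(t) • ((H⁻)* − conj γ(t))⁻¹ ∘ K(conj γ(t)) ∘ (H⁺ − conj γ(t))⁻¹ dt`. -/
noncomputable def OmegaPlus (K : ℂ → H →L[ℂ] H) (γ : ℝ → ℂ) (Hm Hp : H →L[ℂ] H) :
    H →L[ℂ] H :=
  ∫ t in (0:ℝ)..1, (starRingEnd ℂ) (derivWithin γ (Set.Icc 0 1) t) •
    (Ring.inverse (ContinuousLinearMap.adjoint Hm -
        (starRingEnd ℂ) (γ t) • (1 : H →L[ℂ] H)) ∘L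
      K ((starRingEnd ℂ) (γ t)) ∘L
      Ring.inverse (Hp - (starRingEnd ℂ) (γ t) • (1 : H →L[ℂ] H)))

/-!
Along `Γ` the resolvent of the self-adjoint `A` is normal, so `‖(A - z)⁻¹‖ ≤ 1/d₀`, and a Neumann
series turns this into `‖(A + X - z)⁻¹‖ ≤ 1/(d₀ - r)` whenever `‖X‖ ≤ r < d₀`. Since
`(H⁺)* = A + (X⁺)*`, the integrand of `Ω⁻` is bounded by `|γ'| ‖K(γ)‖ / (d₀ - r_min)²`, whence
`‖Ω⁻‖ ≤ V₀ / (d₀ - r_min)²`. As `r_min` is the smaller root of `r (d₀ - r) = V₀`, this bound is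
`r_min / (d₀ - r_min) < 1`. Finally `Ω⁺` is `Ω⁻` for the conjugate curve with `H⁻` and `H⁺`
exchanged, and conjugation preserves `d₀` (the spectrum of `A` is real) and `V₀`
(`‖K(conj μ)‖ = ‖K(μ)*‖ = ‖K(μ)‖`).
-/

open ComplexConjugate

section NormedRing

variable {R : Type*} [NormedRing R] [CompleteSpace R] [NormOneClass R]

theorem norm_ringInverse_one_sub_le {t : R} (ht : ‖t‖ < 1) :
    ‖Ring.inverse (1 - t)‖ ≤ (1 - ‖t‖)⁻¹ := by
  rw [NormedRing.inverse_one_sub t ht]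
  exact (tsum_geometric_le_of_norm_lt_one t ht).trans_eq (by rw [norm_one, sub_self, zero_add])

theorem norm_ringInverse_add_le {a b : R} (ha : IsUnit a) {d r : ℝ} (hd : 0 < d)
    (had : ‖Ring.inverse a‖ ≤ d⁻¹) (hb : ‖b‖ ≤ r) (hrd : r < d) :
    ‖Ring.inverse (a + b)‖ ≤ (d - r)⁻¹ := by
  set w := Ring.inverse a * b
  have hw : ‖-w‖ ≤ d⁻¹ * r := by
    rw [norm_neg]
    exact (norm_mul_le _ _).trans (mul_le_mul had hb (norm_nonneg _) (by positivity))
  have hdr : d⁻¹ * r < 1 := by rwa [inv_mul_lt_iff₀ hd, mul_one]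
  have hfactor : a + b = a * (1 - -w) := by
    rw [sub_neg_eq_add, mul_add, mul_one, ← mul_assoc, Ring.mul_inverse_cancel a ha, one_mul]
  rw [hfactor, Ring.inverse_mul (Or.inl ha)]
  calc ‖Ring.inverse (1 - -w) * Ring.inverse a‖
      ≤ (1 - ‖-w‖)⁻¹ * d⁻¹ :=
        (norm_mul_le _ _).trans <| mul_le_mul (norm_ringInverse_one_sub_le (hw.trans_lt hdr))
          had (norm_nonneg _) (inv_nonneg.2 (by linarith))
    _ ≤ (1 - d⁻¹ * r)⁻¹ * d⁻¹ := by gcongr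
    _ = (d - r)⁻¹ := by field_simp

end NormedRing

section CStarAlgebra

variable {A : Type*} [CStarAlgebra A]

theorem IsStarNormal.norm_ringInverse_sub_smul_one_le {a : A} [IsStarNormal a] {z : ℂ} {d : ℝ}
    (hd : 0 < d) (hdist : ∀ μ ∈ spectrum ℂ a, d ≤ ‖z - μ‖) :
    IsUnit (a - z • 1) ∧ ‖Ring.inverse (a - z • 1)‖ ≤ d⁻¹ := by
  have hne : ∀ μ ∈ spectrum ℂ a, μ - z ≠ 0 := fun μ hμ h => by
    have := hdist μ hμ
    rw [← neg_sub, h, neg_zero, norm_zero] at this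
    linarith
  have hcfc : cfc (fun μ => μ - z) a = a - z • 1 := by
    rw [cfc_sub .., cfc_id' .., cfc_const .., Algebra.algebraMap_eq_smul_one]
  refine ⟨hcfc ▸ (isUnit_cfc_iff _ a).2 hne, ?_⟩
  rw [← hcfc, ← cfc_inv _ _ hne]
  refine norm_cfc_le (by positivity) fun μ hμ => ?_
  rw [norm_inv, ← norm_neg, neg_sub]
  exact inv_anti₀ hd (hdist μ hμ)

theorem IsStarNormal.norm_ringInverse_add_sub_smul_one_le {a b : A} [IsStarNormal a] {z : ℂ}
    {d r : ℝ} (hdist : ∀ μ ∈ spectrum ℂ a, d ≤ ‖z - μ‖) (hb : ‖b‖ ≤ r) (hrd : r < d) :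
    ‖Ring.inverse (a + b - z • 1)‖ ≤ (d - r)⁻¹ := by
  have hd : 0 < d := (norm_nonneg b).trans_lt (hb.trans_lt hrd)
  obtain _ | _ := subsingleton_or_nontrivial A
  · rw [Subsingleton.elim (Ring.inverse _) 0, norm_zero]
    exact inv_nonneg.2 (by linarith)
  obtain ⟨hunit, hbound⟩ := norm_ringInverse_sub_smul_one_le hd hdist
  rw [add_sub_right_comm]
  exact norm_ringInverse_add_le hunit hd hbound hb hrd

end CStarAlgebra

section Contour

variable {E : Type*} [NormedAddCommGroup E] [InnerProductSpace ℂ E]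
  {A : E →L[ℂ] E} {K : ℂ → E →L[ℂ] E} {γ : ℝ → ℂ}

theorem derivWithin_conj (s : Set ℝ) (t : ℝ) :
    derivWithin (fun t => conj (γ t)) s t = conj (derivWithin γ s t) :=
  derivWithin.star

theorem curveDist_le_norm_sub {t : ℝ} (ht : t ∈ Icc (0 : ℝ) 1) {μ : ℂ}
    (hμ : μ ∈ spectrum ℂ A) : curveDist A γ ≤ ‖γ t - μ‖ := by
  have hbdd : BddBelow (range fun s : Icc (0 : ℝ) 1 => infDist (γ s) (spectrum ℂ A)) :=
    ⟨0, by rintro _ ⟨s, rfl⟩; exact infDist_nonneg⟩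
  rw [← dist_eq_norm]
  exact (ciInf_le hbdd ⟨t, ht⟩).trans (infDist_le_dist_of_mem hμ)

theorem curveVar_conj (hK : ∀ t ∈ Icc (0 : ℝ) 1, ‖K (conj (γ t))‖ = ‖K (γ t)‖) :
    curveVar K (fun t => conj (γ t)) = curveVar K γ := by
  refine intervalIntegral.integral_congr fun t ht => ?_
  rw [uIcc_of_le zero_le_one] at ht
  rw [derivWithin_conj, RCLike.norm_conj, hK t ht]

theorem rMin_lt_half (hV : curveVar K γ < curveDist A γ ^ 2 / 4) :
    rMin A K γ < curveDist A γ / 2 := by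
  unfold rMin
  linarith [Real.sqrt_pos.2 (sub_pos.2 hV)]

theorem rMin_mul_sub_rMin (hV : curveVar K γ < curveDist A γ ^ 2 / 4) :
    rMin A K γ * (curveDist A γ - rMin A K γ) = curveVar K γ := by
  unfold rMin
  linear_combination -Real.sq_sqrt (sub_nonneg.2 hV.le)

end Contour

theorem curveDist_conj {A : H →L[ℂ] H} (hA : IsSelfAdjoint A) (γ : ℝ → ℂ) :
    curveDist A (fun t => conj (γ t)) = curveDist A γ := by
  have hσ : conj '' spectrum ℂ A = spectrum ℂ A := by
    refine (image_congr fun μ hμ => ?_).trans (image_id _)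
    rw [hA.mem_spectrum_eq_re hμ, Complex.conj_ofReal, id]
  refine iInf_congr fun t => ?_
  have := infDist_image Complex.isometry_conj (x := γ t) (t := spectrum ℂ A)
  rwa [hσ] at this

theorem omegaPlus_eq_omegaMinus_conj (K : ℂ → H →L[ℂ] H) (γ : ℝ → ℂ) (Hm Hp : H →L[ℂ] H) :
    OmegaPlus K γ Hm Hp = OmegaMinus K (fun t => conj (γ t)) Hp Hm := by
  simp only [OmegaPlus, OmegaMinus, derivWithin_conj]

theorem norm_omegaMinus_le {A : H →L[ℂ] H} (hA : IsSelfAdjoint A) {K : ℂ → H →L[ℂ] H}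
    {γ : ℝ → ℂ}
    (hint : IntervalIntegrable (fun t => ‖derivWithin γ (Icc 0 1) t‖ * ‖K (γ t)‖) volume 0 1)
    {X₁ X₂ : H →L[ℂ] H} {r : ℝ} (hX₁ : ‖X₁‖ ≤ r) (hX₂ : ‖X₂‖ ≤ r) (hr : r < curveDist A γ) :
    ‖OmegaMinus K γ (A + X₁) (A + X₂)‖ ≤ curveVar K γ / (curveDist A γ - r) ^ 2 := by
  have := hA.isStarNormal
  have hresolvent : ∀ t ∈ Icc (0 : ℝ) 1, ∀ X : H →L[ℂ] H, ‖X‖ ≤ r →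
      ‖Ring.inverse (A + X - γ t • 1)‖ ≤ (curveDist A γ - r)⁻¹ := fun t ht X hX =>
    IsStarNormal.norm_ringInverse_add_sub_smul_one_le
      (fun μ hμ => curveDist_le_norm_sub ht hμ) hX hr
  have hadjoint : ContinuousLinearMap.adjoint (A + X₂) = A + star X₂ := by
    rw [← ContinuousLinearMap.star_eq_adjoint, star_add, hA.star_eq]
  rw [OmegaMinus, curveVar, hadjoint, div_eq_inv_mul, ← intervalIntegral.integral_const_mul]
  refine intervalIntegral.norm_integral_le_of_norm_le zero_le_one
    (ae_of_all _ fun t ht => ?_) (hint.const_mul _)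
  have ht' : t ∈ Icc (0 : ℝ) 1 := Ioc_subset_Icc_self ht
  calc _ ≤ ‖derivWithin γ (Icc 0 1) t‖ * (‖Ring.inverse (A + star X₂ - γ t • 1)‖ *
          (‖K (γ t)‖ * ‖Ring.inverse (A + X₁ - γ t • 1)‖)) := by
        rw [norm_smul]
        gcongr
        exact (ContinuousLinearMap.opNorm_comp_le _ _).trans
          (mul_le_mul_of_nonneg_left (ContinuousLinearMap.opNorm_comp_le _ _) (norm_nonneg _))
    _ ≤ ‖derivWithin γ (Icc 0 1) t‖ * ((curveDist A γ - r)⁻¹ *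
          (‖K (γ t)‖ * (curveDist A γ - r)⁻¹)) := by
        gcongr
        · exact hresolvent t ht' _ (by rwa [norm_star])
        · exact hresolvent t ht' _ hX₁
    _ = ((curveDist A γ - r) ^ 2)⁻¹ * (‖derivWithin γ (Icc 0 1) t‖ * ‖K (γ t)‖) := by
        rw [← inv_pow]; ring

theorem statement7_general
    (A : H →L[ℂ] H) (hA : IsSelfAdjoint A)
    (γ : ℝ → ℂ) (hγ : ContDiffOn ℝ 1 γ (Set.Icc 0 1))
    (K : ℂ → H →L[ℂ] H) (hK : ContinuousOn (fun t => K (γ t)) (Set.Icc 0 1))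
    (hKconj : ∀ μ : ℂ,
      (μ ∈ γ '' Set.Icc (0:ℝ) 1 ∨ (starRingEnd ℂ) μ ∈ γ '' Set.Icc (0:ℝ) 1) →
      K ((starRingEnd ℂ) μ) = ContinuousLinearMap.adjoint (K μ))
    (hV : curveVar K γ < (curveDist A γ) ^ 2 / 4)
    (Xm Xp : H →L[ℂ] H)
    (hXmn : ‖Xm‖ ≤ rMin A K γ)
    (hXpn : ‖Xp‖ ≤ rMin A K (fun t => (starRingEnd ℂ) (γ t)))
    :
    ‖OmegaMinus K γ (A + Xm) (A + Xp)‖ < 1 ∧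
    ‖OmegaPlus K γ (A + Xm) (A + Xp)‖ < 1 := by
  have hKnorm : ∀ t ∈ Icc (0 : ℝ) 1, ‖K (conj (γ t))‖ = ‖K (γ t)‖ := fun t ht => by
    rw [hKconj _ (Or.inl ⟨t, ht, rfl⟩), ← ContinuousLinearMap.star_eq_adjoint, norm_star]
  have hrconj : rMin A K (fun t => conj (γ t)) = rMin A K γ := by
    rw [rMin, rMin, curveDist_conj hA, curveVar_conj hKnorm]
  set d := curveDist A γ
  set r := rMin A K γ
  have hcont : ContinuousOn (fun t => ‖derivWithin γ (Icc 0 1) t‖ * ‖K (γ t)‖) (Icc 0 1) :=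
    (hγ.continuousOn_derivWithin (uniqueDiffOn_Icc zero_lt_one) le_rfl).norm.mul hK.norm
  have hcont_conj : ContinuousOn (fun t => ‖derivWithin (fun t => conj (γ t)) (Icc 0 1) t‖ *
      ‖K (conj (γ t))‖) (Icc 0 1) :=
    hcont.congr fun t ht => by rw [derivWithin_conj, RCLike.norm_conj, hKnorm t ht]
  have hr : r < d / 2 := rMin_lt_half hV
  have hd : 0 < d - r := by linarith [(norm_nonneg Xm).trans hXmn]
  have hratio : curveVar K γ / (d - r) ^ 2 < 1 := by
    rw [← rMin_mul_sub_rMin hV, div_lt_one (by positivity), sq]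
    exact mul_lt_mul_of_pos_right (by linarith) hd
  constructor
  · exact (norm_omegaMinus_le hA (hcont.intervalIntegrable_of_Icc zero_le_one) hXmn
      (hrconj ▸ hXpn) (by linarith)).trans_lt hratio
  · rw [omegaPlus_eq_omegaMinus_conj]
    refine (norm_omegaMinus_le hA (hcont_conj.intervalIntegrable_of_Icc zero_le_one)
      (hrconj ▸ hXpn) hXmn ?_).trans_lt ?_
    · rw [curveDist_conj hA]; linarith
    · rwa [curveDist_conj hA, curveVar_conj hKnorm]

/-- `‖Ω⁻‖ < 1` and `‖Ω⁺‖ < 1`. -/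
theorem statement7
    (A : H →L[ℂ] H) (hA : IsSelfAdjoint A)
    (γ : ℝ → ℂ) (hγ : ContDiffOn ℝ 1 γ (Set.Icc 0 1))
    (hΓ : ∀ t ∈ Set.Icc (0:ℝ) 1, γ t ∉ spectrum ℂ A)
    (K : ℂ → H →L[ℂ] H) (hK : ContinuousOn (fun t => K (γ t)) (Set.Icc 0 1))
    (hKconj : ∀ μ : ℂ,
      (μ ∈ γ '' Set.Icc (0:ℝ) 1 ∨ (starRingEnd ℂ) μ ∈ γ '' Set.Icc (0:ℝ) 1) →
      K ((starRingEnd ℂ) μ) = ContinuousLinearMap.adjoint (K μ))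
    (hV : curveVar K γ < (curveDist A γ) ^ 2 / 4)
    (Xm Xp : H →L[ℂ] H)
    (hXmn : ‖Xm‖ ≤ rMin A K γ)
    (hXpn : ‖Xp‖ ≤ rMin A K (fun t => (starRingEnd ℂ) (γ t)))
    (hXmσ : Disjoint (spectrum ℂ (A + Xm)) (γ '' Set.Icc (0:ℝ) 1))
    (hXpσ : Disjoint (spectrum ℂ (A + Xp))
      ((fun t => (starRingEnd ℂ) (γ t)) '' Set.Icc (0:ℝ) 1))
    (hXm : Xm = Vmap K γ (A + Xm))
    (hXp : Xp = Vmap K (fun t => (starRingEnd ℂ) (γ t)) (A + Xp))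
    :
    ‖OmegaMinus K γ (A + Xm) (A + Xp)‖ < 1 ∧
    ‖OmegaPlus K γ (A + Xm) (A + Xp)‖ < 1 :=
  statement7_general A hA γ hγ K hK hKconj hV Xm Xp hXmn hXpn

end
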